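/- Let C₀ > 0, H ≥ 1 an integer, ι > 0; set b_i = C₀·√(H³·ι/i) for i ≥ 1 and β_n = 2·Σ_{i=1}^n α_n^i·b_i for n ≥ 0 (so β_0 = 0). Then for every n ≥ 1, 2·C₀·√(H³·ι/n) ≤ β_n ≤ 4·C₀·√(H³·ι/n). -/

import Mathlib

open scoped BigOperators

noncomputable section

/-- The per-step learning rate `α_t = (H+1)/(H+t)`. -/
def alphaT (H t : ℕ) : ℝ := (H + 1) / (H + t)

/-- The aggregated learning-rate weights `α_n^i`:
`α_0^0 = 1`, `α_n^0 = 0` for `n ≥ 1`, and `α_n^i = α_i ∏_{j=i+1}^n (1 - α_j)` for `1 ≤ i ≤ n`. -/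
def alphaW (H n i : ℕ) : ℝ :=
  if i = 0 then (if n = 0 then 1 else 0)
  else alphaT H i * ∏ j ∈ Finset.Icc (i + 1) n, (1 - alphaT H j)

/-- The exploration bonus `b_i = C₀ √(H³ ι / i)`. -/
def bGen (H : ℕ) (C0 ι : ℝ) (i : ℕ) : ℝ := C0 * Real.sqrt ((H : ℝ) ^ 3 * ι / i)

/-- The aggregated bonus `β_n = 2 ∑_{i=1}^n α_n^i b_i` (so `β_0 = 0`). -/
def betaGen (H : ℕ) (C0 ι : ℝ) (n : ℕ) : ℝ :=
  2 * ∑ i ∈ Finset.Icc 1 n, alphaW H n i * bGen H C0 ι i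

/-!
The weights satisfy `α_{n+1}^i = (1 - α_{n+1}) α_n^i` for `i ≤ n` and `α_{n+1}^{n+1} = α_{n+1}`, so
any weighted average `s_n = ∑_i α_n^i f(i)` obeys `s_{n+1} = (1 - α_{n+1}) s_n + α_{n+1} f(n+1)`.
With `f ≡ 1` this shows the weights sum to `1`, which gives the lower bound since `1/√i ≥ 1/√n`.
For `f(i) = 1/√i` the bound `s_n ≤ 2/√n` propagates by induction: after clearing denominators the
step reduces to `2√n√(n+1) ≤ 2n + 1`, i.e. `(√(n+1) - √n)² ≥ 0`.
-/

open Finset Real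

lemma alphaT_nonneg (H t : ℕ) : 0 ≤ alphaT H t := by
  unfold alphaT; positivity

lemma alphaT_le_one (H : ℕ) {t : ℕ} (ht : 1 ≤ t) : alphaT H t ≤ 1 := by
  unfold alphaT
  have ht' : (1 : ℝ) ≤ t := by exact_mod_cast ht
  rw [div_le_one (by positivity)]
  linarith

lemma alphaT_one (H : ℕ) : alphaT H 1 = 1 := by
  unfold alphaT
  rw [Nat.cast_one, div_self (by positivity)]

lemma alphaW_nonneg (H n i : ℕ) : 0 ≤ alphaW H n i := by
  unfold alphaW
  split_ifs
  · exact zero_le_one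
  · exact le_rfl
  · refine mul_nonneg (alphaT_nonneg H i) (prod_nonneg fun j hj => ?_)
    have hj1 : 1 ≤ j := by have := (mem_Icc.mp hj).1; omega
    linarith [alphaT_le_one H hj1]

lemma alphaW_self (H : ℕ) {n : ℕ} (hn : 1 ≤ n) : alphaW H n n = alphaT H n := by
  unfold alphaW
  rw [if_neg (by omega), Icc_eq_empty (by omega), prod_empty, mul_one]

lemma alphaW_succ (H n : ℕ) {i : ℕ} (hi : i ∈ Icc 1 n) :
    alphaW H (n + 1) i = (1 - alphaT H (n + 1)) * alphaW H n i := by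
  rw [mem_Icc] at hi
  unfold alphaW
  rw [if_neg (by omega), if_neg (by omega), prod_Icc_succ_top (by omega : i + 1 ≤ n + 1)]
  ring

lemma sum_alphaW_mul_succ (H n : ℕ) (f : ℕ → ℝ) :
    ∑ i ∈ Icc 1 (n + 1), alphaW H (n + 1) i * f i
      = (1 - alphaT H (n + 1)) * ∑ i ∈ Icc 1 n, alphaW H n i * f i
        + alphaT H (n + 1) * f (n + 1) := by
  rw [sum_Icc_succ_top (by omega), alphaW_self H (by omega), mul_sum]
  congr 1
  refine sum_congr rfl fun i hi => ?_
  rw [alphaW_succ H n hi, mul_assoc]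

lemma sum_alphaW (H : ℕ) {n : ℕ} (hn : 1 ≤ n) : ∑ i ∈ Icc 1 n, alphaW H n i = 1 := by
  induction n, hn using Nat.le_induction with
  | base => simp [alphaW_self H le_rfl, alphaT_one]
  | succ n _ ih =>
    simpa [ih] using sum_alphaW_mul_succ H n (fun _ => 1)

lemma inv_sqrt_le_sum_alphaW_mul_inv_sqrt (H : ℕ) {n : ℕ} (hn : 1 ≤ n) :
    (√n)⁻¹ ≤ ∑ i ∈ Icc 1 n, alphaW H n i * (√i)⁻¹ := by
  calc (√n)⁻¹ = ∑ i ∈ Icc 1 n, alphaW H n i * (√n)⁻¹ := by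
        rw [← sum_mul, sum_alphaW H hn, one_mul]
    _ ≤ ∑ i ∈ Icc 1 n, alphaW H n i * (√i)⁻¹ := by
        refine sum_le_sum fun i hi => mul_le_mul_of_nonneg_left ?_ (alphaW_nonneg H n i)
        rw [mem_Icc] at hi
        have hi0 : (0 : ℝ) < i := by exact_mod_cast hi.1
        exact inv_anti₀ (sqrt_pos.mpr hi0) (sqrt_le_sqrt (by exact_mod_cast hi.2))

lemma sqrt_mul_sqrt_succ_le (x : ℝ) (hx : 0 ≤ x) : 2 * (√x * √(x + 1)) ≤ 2 * x + 1 := by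
  nlinarith [sq_nonneg (√(x + 1) - √x), sq_sqrt hx, sq_sqrt (by linarith : 0 ≤ x + 1)]

lemma alphaT_succ_step_le (H : ℕ) {n : ℕ} (hn : 1 ≤ n) :
    (1 - alphaT H (n + 1)) * (2 * (√n)⁻¹) + alphaT H (n + 1) * (√(n + 1))⁻¹
      ≤ 2 * (√(n + 1))⁻¹ := by
  have hn0 : (0 : ℝ) < n := by exact_mod_cast hn
  have ha : 0 < √(n : ℝ) := sqrt_pos.mpr hn0
  have hb : 0 < √((n : ℝ) + 1) := sqrt_pos.mpr (by linarith)
  have hab := sqrt_mul_sqrt_succ_le n hn0.le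
  have hsq : √(n : ℝ) * √(n : ℝ) = n := mul_self_sqrt hn0.le
  have hH : (0 : ℝ) ≤ H := Nat.cast_nonneg H
  have hα : alphaT H (n + 1) = ((H : ℝ) + 1) / ((H : ℝ) + n + 1) := by
    unfold alphaT; push_cast; ring
  rw [hα, one_sub_div (by positivity)]
  field_simp
  nlinarith [mul_pos ha hb]

lemma sum_alphaW_mul_inv_sqrt_le (H : ℕ) {n : ℕ} (hn : 1 ≤ n) :
    ∑ i ∈ Icc 1 n, alphaW H n i * (√i)⁻¹ ≤ 2 * (√n)⁻¹ := by
  induction n, hn using Nat.le_induction with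
  | base => simp [alphaW_self H le_rfl, alphaT_one]
  | succ n hn ih =>
    have hα : 0 ≤ 1 - alphaT H (n + 1) := by linarith [alphaT_le_one H (by omega : 1 ≤ n + 1)]
    rw [sum_alphaW_mul_succ]
    push_cast
    linarith [mul_le_mul_of_nonneg_left ih hα, alphaT_succ_step_le H hn]

lemma bGen_eq (H : ℕ) (C0 ι : ℝ) (i : ℕ) :
    bGen H C0 ι i = C0 * √((H : ℝ) ^ 3 * ι) * (√i)⁻¹ := by
  rw [bGen, sqrt_div' _ (Nat.cast_nonneg i), div_eq_mul_inv, mul_assoc]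

lemma betaGen_eq (H : ℕ) (C0 ι : ℝ) (n : ℕ) :
    betaGen H C0 ι n = 2 * C0 * √((H : ℝ) ^ 3 * ι) * ∑ i ∈ Icc 1 n, alphaW H n i * (√i)⁻¹ := by
  simp only [betaGen, bGen_eq, mul_sum]
  refine sum_congr rfl fun i _ => by ring

theorem betaGen_bounds_general (H : ℕ) (C0 ι : ℝ) (hC0 : 0 < C0)
    (n : ℕ) (hn : 1 ≤ n) :
    2 * C0 * Real.sqrt ((H : ℝ) ^ 3 * ι / n) ≤ betaGen H C0 ι n ∧
    betaGen H C0 ι n ≤ 4 * C0 * Real.sqrt ((H : ℝ) ^ 3 * ι / n) := by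
  have hK : 0 ≤ 2 * C0 * √((H : ℝ) ^ 3 * ι) := by positivity
  rw [betaGen_eq, sqrt_div' _ (Nat.cast_nonneg n), div_eq_mul_inv]
  constructor
  · calc 2 * C0 * (√((H : ℝ) ^ 3 * ι) * (√n)⁻¹)
        = 2 * C0 * √((H : ℝ) ^ 3 * ι) * (√n)⁻¹ := by ring
      _ ≤ _ := mul_le_mul_of_nonneg_left (inv_sqrt_le_sum_alphaW_mul_inv_sqrt H hn) hK
  · calc _ ≤ 2 * C0 * √((H : ℝ) ^ 3 * ι) * (2 * (√n)⁻¹) :=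
          mul_le_mul_of_nonneg_left (sum_alphaW_mul_inv_sqrt_le H hn) hK
      _ = 4 * C0 * (√((H : ℝ) ^ 3 * ι) * (√n)⁻¹) := by ring

/-- For every `n ≥ 1`, `2 C₀ √(H³ι/n) ≤ β_n ≤ 4 C₀ √(H³ι/n)`. -/
theorem betaGen_bounds (H : ℕ) (hH : 1 ≤ H) (C0 ι : ℝ) (hC0 : 0 < C0) (hι : 0 < ι)
    (n : ℕ) (hn : 1 ≤ n) :
    2 * C0 * Real.sqrt ((H : ℝ) ^ 3 * ι / n) ≤ betaGen H C0 ι n ∧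
    betaGen H C0 ι n ≤ 4 * C0 * Real.sqrt ((H : ℝ) ^ 3 * ι / n) :=
  betaGen_bounds_general H C0 ι hC0 n hn
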